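/- Let Π be a program over atoms indexed by natural numbers consisting of: the fact even(0), and for each natural number n the rule even(n+2) ← even(n), and the rule 'q ← min{X : even(X)} = 0' whose aggregate reduct w.r.t. S is: if the minimum of {n : even(n) ∈ S} does not exist or is nonzero, delete the rule; otherwise replace the body by {even(n) : even(n) ∈ S} (possibly infinite). Then S = {q} ∪ {even(2k) : k ∈ ℕ} is an answer set of Π (i.e., S equals the least model of its reduct), and it is the only answer set. -/

import Mathlib

/-- Models and least models of ground definite programs (bodies may be infinite). -/
def IsModel {α : Type*} (P : Set (α × Set α)) (A : Set α) : Prop :=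
  ∀ r ∈ P, r.2 ⊆ A → r.1 ∈ A

def IsLeastModel {α : Type*} (P : Set (α × Set α)) (A : Set α) : Prop :=
  IsModel P A ∧ ∀ M : Set α, IsModel P M → A ⊆ M

/-- Atoms: `none` = q, `some n` = even(n).  Aggregate reduct of the program
`{even(0)., even(n+2) ← even(n) (n ∈ ℕ), q ← min{X : even(X)} = 0}` w.r.t. S:
the q-rule is deleted unless the minimum of {n : even(n) ∈ S} exists and is 0,
in which case its body becomes {even(n) : even(n) ∈ S}. -/
def reduct (S : Set (Option ℕ)) : Set (Option ℕ × Set (Option ℕ)) :=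
  {r | r = (some 0, (∅ : Set (Option ℕ)))} ∪
  {r | ∃ n : ℕ, r = (some (n + 2), {some n})} ∪
  {r | IsLeast {n : ℕ | some n ∈ S} 0 ∧
       r = (none, {a : Option ℕ | ∃ n : ℕ, some n ∈ S ∧ a = some n})}

def AnswerSet (S : Set (Option ℕ)) : Prop := IsLeastModel (reduct S) S

def S₀ : Set (Option ℕ) := {none} ∪ {a : Option ℕ | ∃ k : ℕ, a = some (2 * k)}

/-!
Every model of a reduct contains the even atoms `even(2k)`, by induction along the rules
`even(n+2) ← even(n)`, and `S₀` is a model of every reduct. Hence an answer set `S` lies in `S₀`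
and contains `even(0)`, so its minimum is `0` and the `q`-rule survives in the reduct; its body
consists of even atoms only, so every model of the reduct contains `q` too, hence all of `S₀`.
-/

theorem some_mem_S₀_iff {n : ℕ} : some n ∈ S₀ ↔ Even n := by
  simp [S₀, Even, two_mul, eq_comm]

theorem none_mem_S₀ : none ∈ S₀ := Or.inl rfl

theorem isModel_reduct_S₀ (S : Set (Option ℕ)) : IsModel (reduct S) S₀ := by
  rintro r ((rfl | ⟨n, rfl⟩) | ⟨-, rfl⟩) hbody
  · exact some_mem_S₀_iff.2 Even.zero
  · have hn : Even n := some_mem_S₀_iff.1 (hbody rfl)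
    exact some_mem_S₀_iff.2 (by simpa [Nat.even_add] using hn)
  · exact none_mem_S₀

theorem IsModel.some_mem_of_even {S M : Set (Option ℕ)} (hM : IsModel (reduct S) M) {n : ℕ}
    (hn : Even n) : some n ∈ M := by
  obtain ⟨k, rfl⟩ := hn
  induction k with
  | zero => exact hM _ (Or.inl (Or.inl rfl)) (Set.empty_subset M)
  | succ k ih =>
    rw [show k + 1 + (k + 1) = k + k + 2 by omega]
    exact hM _ (Or.inl (Or.inr ⟨k + k, rfl⟩)) (Set.singleton_subset_iff.2 ih)

theorem IsModel.S₀_subset {S M : Set (Option ℕ)} (hM : IsModel (reduct S) M) (hS : S ⊆ S₀)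
    (h0 : some 0 ∈ S) : S₀ ⊆ M := by
  have hq : IsLeast {n : ℕ | some n ∈ S} 0 := ⟨h0, fun n _ => n.zero_le⟩
  rintro a (rfl | ⟨k, rfl⟩)
  · refine hM _ (Or.inr ⟨hq, rfl⟩) ?_
    rintro a ⟨n, hn, rfl⟩
    exact hM.some_mem_of_even (some_mem_S₀_iff.1 (hS hn))
  · exact hM.some_mem_of_even (even_two_mul k)

theorem evens_q_unique_answer_set :
    AnswerSet S₀ ∧ ∀ S : Set (Option ℕ), AnswerSet S → S = S₀ := by
  refine ⟨⟨isModel_reduct_S₀ S₀, fun M hM => hM.S₀_subset subset_rfl ?_⟩, ?_⟩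
  · exact some_mem_S₀_iff.2 Even.zero
  · rintro S ⟨hmodel, hleast⟩
    have hS : S ⊆ S₀ := hleast S₀ (isModel_reduct_S₀ S)
    exact hS.antisymm (hmodel.S₀_subset hS (hmodel.some_mem_of_even Even.zero))
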